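/- arXiv:1803.04568 — 3 statements merged into one kernel-verified Lean document; each statement's English description precedes it below -/
import Mathlib

section
/- Let B = B(0,1) be the open unit ball in ℝ² and suppose C > 0 is a constant such that ‖∂_x² f‖_{L¹} ≤ C(‖f‖_∞ + ‖∇f‖_∞ + ‖Δf‖_{L¹}) for every f ∈ C_0^∞(B). Then ‖∂_x² f‖_{L¹} ≤ C‖Δf‖_{L¹} for every f ∈ C_0^∞(ℝ²). -/
open MeasureTheory Real

noncomputable section

/-- First partial derivative (with respect to the first coordinate) on `ℝ²`. -/
def pd1 (f : ℝ × ℝ → ℝ) (p : ℝ × ℝ) : ℝ := fderiv ℝ f p (1, 0)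

/-- Second partial derivative (with respect to the second coordinate) on `ℝ²`. -/
def pd2 (f : ℝ × ℝ → ℝ) (p : ℝ × ℝ) : ℝ := fderiv ℝ f p (0, 1)

/-- Euclidean magnitude of a vector in `ℝ²`. -/
def emag (v : ℝ × ℝ) : ℝ := Real.sqrt (v.1 ^ 2 + v.2 ^ 2)

/-- The open Euclidean unit ball `B(0,1)` in `ℝ²`. -/
def uball : Set (ℝ × ℝ) := {p : ℝ × ℝ | p.1 ^ 2 + p.2 ^ 2 < 1}

/-!
In the plane the `L¹` norm of a second derivative is invariant under the dilation
`f ↦ f (a • ·)`, and so is the sup norm of `f`, while the sup norm of the gradient grows like `a`.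
Tiling the unit ball with `n²` disjoint copies of `f` dilated by `a ≍ n` therefore multiplies
both `L¹` terms of the hypothesis by `n²`, leaves `‖g‖_∞` unchanged and makes `‖∇g‖_∞` of
order `n`. Dividing by `n²` and letting `n → ∞` removes the lower order terms.
-/

open Metric Function Finset

section PairwiseEqZeroOr

variable {ι M : Type*} [AddCommMonoid M] {s : Finset ι} {v : ι → M}

theorem Finset.sum_eq_of_pairwise_eq_zero_or
    (hv : (s : Set ι).Pairwise fun i j => v i = 0 ∨ v j = 0) {i : ι} (hi : i ∈ s)
    (hvi : v i ≠ 0) : ∑ j ∈ s, v j = v i :=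
  Finset.sum_eq_single_of_mem i hi fun _ hj hji => (hv hj hi hji).resolve_right hvi

theorem apply_sum_eq_sum_apply_of_pairwise {N : Type*} [AddCommMonoid N] (Φ : M → N)
    (hΦ : Φ 0 = 0) (hv : (s : Set ι).Pairwise fun i j => v i = 0 ∨ v j = 0) :
    Φ (∑ i ∈ s, v i) = ∑ i ∈ s, Φ (v i) := by
  by_cases h : ∀ i ∈ s, v i = 0
  · rw [Finset.sum_eq_zero h, hΦ, Finset.sum_eq_zero fun i hi => by rw [h i hi, hΦ]]
  · push Not at h
    obtain ⟨i, hi, hvi⟩ := h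
    rw [Finset.sum_eq_of_pairwise_eq_zero_or hv hi hvi, Finset.sum_eq_single_of_mem i hi
      fun j hj hji => by rw [(hv hj hi hji).resolve_right hvi, hΦ]]

theorem apply_sum_le_of_pairwise (Φ : M → ℝ) {C : ℝ} (h0 : Φ 0 ≤ C)
    (hC : ∀ i ∈ s, Φ (v i) ≤ C) (hv : (s : Set ι).Pairwise fun i j => v i = 0 ∨ v j = 0) :
    Φ (∑ i ∈ s, v i) ≤ C := by
  by_cases h : ∀ i ∈ s, v i = 0
  · rwa [Finset.sum_eq_zero h]
  · push Not at h
    obtain ⟨i, hi, hvi⟩ := h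
    rw [Finset.sum_eq_of_pairwise_eq_zero_or hv hi hvi]
    exact hC i hi

theorem pairwise_eq_zero_or_of_support_subset {X : Type*} {K : ι → Set X}
    (hK : (s : Set ι).PairwiseDisjoint K) {w : ι → X → M} (hw : ∀ i ∈ s, support (w i) ⊆ K i)
    (x : X) : (s : Set ι).Pairwise fun i j => w i x = 0 ∨ w j x = 0 := by
  intro i hi j hj hij
  by_contra! h
  exact Set.disjoint_left.mp (hK hi hj hij) (hw i hi h.1) (hw j hj h.2)

end PairwiseEqZeroOr

section RescaledSum

variable {E F : Type*} [NormedAddCommGroup E] [NormedSpace ℝ E] [NormedAddCommGroup F]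
  {f : E → F} {a r : ℝ} {s : Finset E}

def rescaledSum (f : E → F) (a : ℝ) (s : Finset E) (p : E) : F := ∑ c ∈ s, f (a • (p - c))

theorem support_comp_smul_sub_subset (ha : 0 < a) (hf : support f ⊆ closedBall 0 (a * r))
    (c : E) : support (fun p => f (a • (p - c))) ⊆ closedBall c r := by
  intro p hp
  have := hf hp
  rw [mem_closedBall_zero_iff, norm_smul, Real.norm_eq_abs, abs_of_pos ha] at this
  rw [mem_closedBall, dist_eq_norm]
  exact le_of_mul_le_mul_left this ha

theorem pairwise_rescaled_eq_zero_or (ha : 0 < a) (hf : support f ⊆ closedBall 0 (a * r))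
    (hs : (s : Set E).PairwiseDisjoint (closedBall · r)) (p : E) :
    (s : Set E).Pairwise fun c d => f (a • (p - c)) = 0 ∨ f (a • (p - d)) = 0 :=
  pairwise_eq_zero_or_of_support_subset hs (fun c _ => support_comp_smul_sub_subset ha hf c) p

theorem tsupport_rescaledSum_subset (ha : 0 < a) (hf : support f ⊆ closedBall 0 (a * r)) :
    tsupport (rescaledSum f a s) ⊆ ⋃ c ∈ s, closedBall c r := by
  refine closure_minimal (fun p hp => ?_)
    (s.finite_toSet.isClosed_biUnion fun c _ => isClosed_closedBall)
  obtain ⟨c, hc, hpc⟩ := Finset.exists_ne_zero_of_sum_ne_zero hp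
  exact Set.mem_biUnion hc (support_comp_smul_sub_subset ha hf c hpc)

theorem hasCompactSupport_rescaledSum [ProperSpace E] (ha : 0 < a)
    (hf : support f ⊆ closedBall 0 (a * r)) : HasCompactSupport (rescaledSum f a s) :=
  (s.isCompact_biUnion fun c _ => isCompact_closedBall c r).of_isClosed_subset
    (isClosed_tsupport _) (tsupport_rescaledSum_subset ha hf)

theorem contDiff_rescaledSum [NormedSpace ℝ F] {n : WithTop ℕ∞} (hf : ContDiff ℝ n f) :
    ContDiff ℝ n (rescaledSum f a s) :=
  ContDiff.sum fun _ _ => hf.comp ((contDiff_id.sub contDiff_const).const_smul a)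

theorem fderiv_rescaledSum_apply [NormedSpace ℝ F] (hf : Differentiable ℝ f) (p v : E) :
    fderiv ℝ (rescaledSum f a s) p v = a • rescaledSum (fun q => fderiv ℝ f q v) a s p := by
  have hcopy : ∀ c, HasFDerivAt (fun q => f (a • (q - c)))
      ((fderiv ℝ f (a • (p - c))).comp (a • ContinuousLinearMap.id ℝ E)) p := fun c =>
    (hf _).hasFDerivAt.comp p (((hasFDerivAt_id p).sub_const c).const_smul a)
  unfold rescaledSum
  rw [fderiv_fun_sum fun c _ => (hcopy c).differentiableAt]
  simp [(hcopy _).fderiv, Finset.smul_sum]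

theorem integral_norm_rescaledSum [MeasurableSpace E] [BorelSpace E] [FiniteDimensional ℝ E]
    (μ : Measure E) [μ.IsAddHaarMeasure] (hf : Integrable f μ) (ha : 0 < a)
    (hfs : support f ⊆ closedBall 0 (a * r)) (hs : (s : Set E).PairwiseDisjoint (closedBall · r)) :
    ∫ p, ‖rescaledSum f a s p‖ ∂μ = s.card * |(a ^ Module.finrank ℝ E)⁻¹| * ∫ p, ‖f p‖ ∂μ := by
  have hnorm : ∀ p, ‖rescaledSum f a s p‖ = ∑ c ∈ s, ‖f (a • (p - c))‖ := fun p =>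
    apply_sum_eq_sum_apply_of_pairwise _ norm_zero (pairwise_rescaled_eq_zero_or ha hfs hs p)
  have hcopy : ∀ c : E,
      ∫ p, ‖f (a • (p - c))‖ ∂μ = |(a ^ Module.finrank ℝ E)⁻¹| * ∫ p, ‖f p‖ ∂μ := fun c => by
    rw [integral_sub_right_eq_self (fun p => ‖f (a • p)‖) c,
      Measure.integral_comp_smul μ (‖f ·‖) a, smul_eq_mul]
  simp_rw [hnorm]
  rw [integral_finsetSum s fun c _ => ((hf.comp_smul ha.ne').comp_sub_right c).norm]
  simp [hcopy, Finset.sum_const, nsmul_eq_mul, mul_assoc]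

theorem apply_rescaledSum_le (Φ : F → ℝ) {C : ℝ} (h0 : Φ 0 ≤ C) (hC : ∀ q, Φ (f q) ≤ C)
    (ha : 0 < a) (hf : support f ⊆ closedBall 0 (a * r))
    (hs : (s : Set E).PairwiseDisjoint (closedBall · r)) (p : E) :
    Φ (rescaledSum f a s p) ≤ C :=
  apply_sum_le_of_pairwise Φ h0 (fun _ _ => hC _) (pairwise_rescaled_eq_zero_or ha hf hs p)

end RescaledSum

section Plane

variable {f : ℝ × ℝ → ℝ} {a r : ℝ} {s : Finset (ℝ × ℝ)}

theorem tsupport_pd1_subset (f : ℝ × ℝ → ℝ) : tsupport (pd1 f) ⊆ tsupport f :=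
  tsupport_fderiv_apply_subset ℝ (1, 0)

theorem tsupport_pd2_subset (f : ℝ × ℝ → ℝ) : tsupport (pd2 f) ⊆ tsupport f :=
  tsupport_fderiv_apply_subset ℝ (0, 1)

theorem HasCompactSupport.pd1 (hf : HasCompactSupport f) :
    HasCompactSupport (pd1 f) :=
  hf.fderiv_apply ℝ (1, 0)

theorem HasCompactSupport.pd2 (hf : HasCompactSupport f) :
    HasCompactSupport (pd2 f) :=
  hf.fderiv_apply ℝ (0, 1)

theorem support_grad_subset (f : ℝ × ℝ → ℝ) :
    support (fun q => (pd1 f q, pd2 f q)) ⊆ tsupport f := by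
  intro q hq
  by_contra hqf
  exact hq (Prod.ext
    (image_eq_zero_of_notMem_tsupport (f := pd1 f) fun h => hqf (tsupport_pd1_subset f h))
    (image_eq_zero_of_notMem_tsupport (f := pd2 f) fun h => hqf (tsupport_pd2_subset f h)))

theorem exists_emag_grad_le (hf : ContDiff ℝ 1 f) (hfc : HasCompactSupport f) :
    ∃ M, ∀ p, emag (pd1 f p, pd2 f p) ≤ M := by
  set Φ : (ℝ × ℝ →L[ℝ] ℝ) → ℝ := fun L => emag (L (1, 0), L (0, 1))
  have hΦ : Continuous Φ := by unfold Φ emag; fun_prop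
  obtain ⟨M, hM⟩ := (hΦ.comp (hf.continuous_fderiv one_ne_zero)).bounded_above_of_compact_support
    ((hfc.fderiv ℝ).comp_left (g := Φ) (by simp [Φ, emag]))
  exact ⟨M, fun p => (le_abs_self _).trans (hM p)⟩

theorem contDiff_pd1 {m n : WithTop ℕ∞} (hf : ContDiff ℝ n f) (hmn : m + 1 ≤ n) :
    ContDiff ℝ m (pd1 f) :=
  (hf.fderiv_right hmn).clm_apply contDiff_const

theorem contDiff_pd2 {m n : WithTop ℕ∞} (hf : ContDiff ℝ n f) (hmn : m + 1 ≤ n) :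
    ContDiff ℝ m (pd2 f) :=
  (hf.fderiv_right hmn).clm_apply contDiff_const

theorem pd1_smul (c : ℝ) (f : ℝ × ℝ → ℝ) : pd1 (c • f) = c • pd1 f := by
  ext p
  simp [pd1, fderiv_const_smul_field]

theorem pd2_smul (c : ℝ) (f : ℝ × ℝ → ℝ) : pd2 (c • f) = c • pd2 f := by
  ext p
  simp [pd2, fderiv_const_smul_field]

theorem pd1_rescaledSum (hf : Differentiable ℝ f) :
    pd1 (rescaledSum f a s) = a • rescaledSum (pd1 f) a s :=
  funext fun p => fderiv_rescaledSum_apply hf p (1, 0)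

theorem pd2_rescaledSum (hf : Differentiable ℝ f) :
    pd2 (rescaledSum f a s) = a • rescaledSum (pd2 f) a s :=
  funext fun p => fderiv_rescaledSum_apply hf p (0, 1)

theorem pd1_pd1_rescaledSum_apply (hf : ContDiff ℝ 2 f) (p : ℝ × ℝ) :
    pd1 (pd1 (rescaledSum f a s)) p = a ^ 2 * rescaledSum (pd1 (pd1 f)) a s p := by
  rw [pd1_rescaledSum (hf.differentiable two_ne_zero), pd1_smul,
    pd1_rescaledSum ((contDiff_pd1 hf (by norm_num)).differentiable one_ne_zero)]
  simp [sq, mul_assoc]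

theorem pd2_pd2_rescaledSum_apply (hf : ContDiff ℝ 2 f) (p : ℝ × ℝ) :
    pd2 (pd2 (rescaledSum f a s)) p = a ^ 2 * rescaledSum (pd2 (pd2 f)) a s p := by
  rw [pd2_rescaledSum (hf.differentiable two_ne_zero), pd2_smul,
    pd2_rescaledSum ((contDiff_pd2 hf (by norm_num)).differentiable one_ne_zero)]
  simp [sq, mul_assoc]

theorem laplacian_rescaledSum_apply (hf : ContDiff ℝ 2 f) (p : ℝ × ℝ) :
    pd1 (pd1 (rescaledSum f a s)) p + pd2 (pd2 (rescaledSum f a s)) p =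
      a ^ 2 * rescaledSum (fun q => pd1 (pd1 f) q + pd2 (pd2 f) q) a s p := by
  rw [pd1_pd1_rescaledSum_apply hf, pd2_pd2_rescaledSum_apply hf, ← mul_add]
  simp only [rescaledSum, Finset.sum_add_distrib]

theorem emag_mul (a x y : ℝ) : emag (a * x, a * y) = |a| * emag (x, y) := by
  rw [emag, emag, ← sqrt_sq_eq_abs, ← sqrt_mul (sq_nonneg a)]
  ring_nf

theorem emag_grad_rescaledSum (hf : Differentiable ℝ f) (ha : 0 ≤ a) (p : ℝ × ℝ) :
    emag (pd1 (rescaledSum f a s) p, pd2 (rescaledSum f a s) p) =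
      a * emag (rescaledSum (fun q => (pd1 f q, pd2 f q)) a s p) := by
  rw [pd1_rescaledSum hf, pd2_rescaledSum hf, Pi.smul_apply, Pi.smul_apply, smul_eq_mul,
    smul_eq_mul, emag_mul, abs_of_nonneg ha]
  congr 2
  ext <;> simp [rescaledSum, Prod.fst_sum, Prod.snd_sum]

theorem integral_abs_sq_mul_rescaledSum {h : ℝ × ℝ → ℝ} (hh : Integrable h) (ha : 0 < a)
    (hhs : support h ⊆ closedBall 0 (a * r))
    (hs : (s : Set (ℝ × ℝ)).PairwiseDisjoint (closedBall · r)) :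
    ∫ p, |a ^ 2 * rescaledSum h a s p| = s.card * ∫ p, |h p| := by
  have := integral_norm_rescaledSum volume hh ha hhs hs
  simp only [Real.norm_eq_abs, Module.finrank_prod, Module.finrank_self, Nat.reduceAdd] at this
  simp_rw [abs_mul]
  rw [integral_const_mul, this, abs_inv, abs_of_pos (pow_pos ha 2)]
  field_simp

end Plane

theorem closedBall_half_subset_uball : closedBall (0 : ℝ × ℝ) (1 / 2) ⊆ uball := by
  intro p hp
  rw [mem_closedBall_zero_iff, Prod.norm_def, max_le_iff, Real.norm_eq_abs, Real.norm_eq_abs,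
    abs_le, abs_le] at hp
  show p.1 ^ 2 + p.2 ^ 2 < 1
  nlinarith

theorem exists_grid {n : ℕ} (hn : 0 < n) :
    ∃ s : Finset (ℝ × ℝ), s.card = n ^ 2 ∧
      (s : Set (ℝ × ℝ)).PairwiseDisjoint (closedBall · (8 * n)⁻¹) ∧
      ∀ c ∈ s, closedBall c (8 * n)⁻¹ ⊆ closedBall 0 (1 / 2) := by
  have hn' : (0 : ℝ) < n := Nat.cast_pos.mpr hn
  -- balls in `ℝ × ℝ` are for the sup metric: the squares of a grid of mesh `(2 * n)⁻¹`
  set e : ℕ → ℝ := fun i => i / (2 * n)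
  have he : Injective e := fun i j hij => by
    exact_mod_cast (div_left_inj' (by positivity : (2 * n : ℝ) ≠ 0)).mp hij
  have hsep : ∀ i j, i ≠ j → (2 * n : ℝ)⁻¹ ≤ dist (e i) (e j) := fun i j hij => by
    have hij' : (1 : ℤ) ≤ |(i : ℤ) - j| :=
      Int.one_le_abs (sub_ne_zero.mpr (by exact_mod_cast hij))
    have : (1 : ℝ) ≤ |(i : ℝ) - j| := by exact_mod_cast hij'
    rw [Real.dist_eq, ← sub_div, abs_div, abs_of_pos (by positivity : (0 : ℝ) < 2 * n),
      inv_eq_one_div]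
    exact div_le_div_of_nonneg_right this (by positivity)
  have hnorm : ∀ i < n, ‖e i‖ ≤ 1 / 2 - (8 * n : ℝ)⁻¹ := fun i hi => by
    have : (i : ℝ) + 1 ≤ n := by exact_mod_cast hi
    show ‖(i : ℝ) / (2 * n)‖ ≤ _
    rw [Real.norm_of_nonneg (by positivity)]
    field_simp
    linarith
  have hrad : (8 * n : ℝ)⁻¹ + (8 * n : ℝ)⁻¹ < (2 * n : ℝ)⁻¹ := by
    field_simp
    norm_num
  refine ⟨(range n ×ˢ range n).image (Prod.map e e), ?_, ?_, ?_⟩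
  · rw [card_image_of_injective _ (he.prodMap he), card_product, card_range, sq]
  · intro c hc d hd hcd
    obtain ⟨⟨i, j⟩, -, rfl⟩ := mem_image.mp hc
    obtain ⟨⟨k, l⟩, -, rfl⟩ := mem_image.mp hd
    apply closedBall_disjoint_closedBall
    rw [Prod.dist_eq]
    by_cases hik : i = k
    · have hjl : j ≠ l := fun hjl => hcd (by rw [hik, hjl])
      exact hrad.trans_le ((hsep j l hjl).trans (le_max_right _ _))
    · exact hrad.trans_le ((hsep i k hik).trans (le_max_left _ _))
  · intro c hc
    obtain ⟨⟨i, j⟩, hij, rfl⟩ := mem_image.mp hc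
    rw [mem_product, mem_range, mem_range] at hij
    apply closedBall_subset_closedBall'
    rw [dist_zero_right, Prod.norm_def, Prod.map_fst, Prod.map_snd]
    linarith [max_le (hnorm i hij.1) (hnorm j hij.2)]

theorem le_of_forall_nat_sq_mul_le {x y A B : ℝ}
    (h : ∀ n : ℕ, 0 < n → (n : ℝ) ^ 2 * x ≤ A + B * n + n ^ 2 * y) : x ≤ y := by
  by_contra! hxy
  obtain ⟨n, hn⟩ := exists_nat_gt ((|A| + |B|) / (x - y))
  have hn0 : 0 < n := Nat.cast_pos.mp (lt_of_le_of_lt (by positivity) hn)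
  have hn1 : (1 : ℝ) ≤ n := Nat.one_le_cast.mpr hn0
  have hgap : |A| + |B| < n * (x - y) := by rwa [div_lt_iff₀ (sub_pos.mpr hxy)] at hn
  have hB : B * n ≤ |B| * n := mul_le_mul_of_nonneg_right (le_abs_self B) (Nat.cast_nonneg n)
  have hA : A ≤ |A| * n := (le_abs_self A).trans (le_mul_of_one_le_right (abs_nonneg A) hn1)
  nlinarith [h n hn0]

theorem exists_rescaled_copies {f : ℝ × ℝ → ℝ} {k : WithTop ℕ∞} (hf : ContDiff ℝ k f)
    (hk : 2 ≤ k) (hfc : HasCompactSupport f) {R : ℝ} (hR : 0 < R)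
    (hfR : tsupport f ⊆ closedBall 0 R) {M₁ M₂ : ℝ} (hM₁ : ∀ p, |f p| ≤ M₁)
    (hM₂ : ∀ p, emag (pd1 f p, pd2 f p) ≤ M₂) {n : ℕ} (hn : 0 < n) :
    ∃ g : ℝ × ℝ → ℝ, ContDiff ℝ k g ∧ HasCompactSupport g ∧ tsupport g ⊆ uball ∧
      (⨆ p, |g p|) ≤ M₁ ∧ (⨆ p, emag (pd1 g p, pd2 g p)) ≤ 8 * R * n * M₂ ∧
      ∫ p, |pd1 (pd1 g) p| = n ^ 2 * ∫ p, |pd1 (pd1 f) p| ∧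
      ∫ p, |pd1 (pd1 g) p + pd2 (pd2 g) p| =
        n ^ 2 * ∫ p, |pd1 (pd1 f) p + pd2 (pd2 f) p| := by
  obtain ⟨s, hcard, hdisj, hsub⟩ := exists_grid hn
  set a : ℝ := 8 * R * n
  have ha : 0 < a := by positivity
  have haR : a * (8 * n : ℝ)⁻¹ = R := by
    simp only [a]
    field_simp
  have hfa : tsupport f ⊆ closedBall 0 (a * (8 * n : ℝ)⁻¹) := haR ▸ hfR
  have hf2 : ContDiff ℝ 2 f := hf.of_le hk
  have hc₁₁ : Continuous (pd1 (pd1 f)) :=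
    (contDiff_pd1 (contDiff_pd1 hf2 (m := 1) (by norm_num)) (m := 0) (by norm_num)).continuous
  have hc₂₂ : Continuous (pd2 (pd2 f)) :=
    (contDiff_pd2 (contDiff_pd2 hf2 (m := 1) (by norm_num)) (m := 0) (by norm_num)).continuous
  have hs₁₁ : tsupport (pd1 (pd1 f)) ⊆ tsupport f :=
    (tsupport_pd1_subset _).trans (tsupport_pd1_subset f)
  have hs₂₂ : tsupport (pd2 (pd2 f)) ⊆ tsupport f :=
    (tsupport_pd2_subset _).trans (tsupport_pd2_subset f)
  refine ⟨rescaledSum f a s, contDiff_rescaledSum hf,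
    hasCompactSupport_rescaledSum ha ((subset_tsupport f).trans hfa), ?_, ?_, ?_, ?_, ?_⟩
  · refine (tsupport_rescaledSum_subset ha ((subset_tsupport f).trans hfa)).trans ?_
    exact Set.iUnion₂_subset fun c hc => (hsub c hc).trans closedBall_half_subset_uball
  · refine ciSup_le fun p => apply_rescaledSum_le (|·|) ?_ hM₁ ha
      ((subset_tsupport f).trans hfa) hdisj p
    simpa using (abs_nonneg _).trans (hM₁ 0)
  · refine ciSup_le fun p => ?_
    rw [emag_grad_rescaledSum (hf2.differentiable two_ne_zero) ha.le]
    refine mul_le_mul_of_nonneg_left (apply_rescaledSum_le emag ?_ hM₂ ha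
      ((support_grad_subset f).trans hfa) hdisj p) ha.le
    simpa [emag] using (sqrt_nonneg _).trans (hM₂ 0)
  · simp_rw [pd1_pd1_rescaledSum_apply hf2]
    rw [integral_abs_sq_mul_rescaledSum (hc₁₁.integrable_of_hasCompactSupport hfc.pd1.pd1) ha
      ((subset_tsupport _).trans (hs₁₁.trans hfa)) hdisj, hcard, Nat.cast_pow]
  · simp_rw [laplacian_rescaledSum_apply hf2]
    rw [integral_abs_sq_mul_rescaledSum (h := fun q => pd1 (pd1 f) q + pd2 (pd2 f) q)
      ((hc₁₁.add hc₂₂).integrable_of_hasCompactSupport (hfc.pd1.pd1.add hfc.pd2.pd2)) ha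
      ((support_add _ _).trans (Set.union_subset ((subset_tsupport _).trans (hs₁₁.trans hfa))
        ((subset_tsupport _).trans (hs₂₂.trans hfa)))) hdisj, hcard, Nat.cast_pow]

/-- If `C > 0` is such that `‖∂_x² f‖_{L¹} ≤ C (‖f‖_∞ + ‖∇f‖_∞ + ‖Δf‖_{L¹})` for every
`f ∈ C_0^∞(B(0,1))`, then `‖∂_x² f‖_{L¹} ≤ C ‖Δf‖_{L¹}` for every `f ∈ C_0^∞(ℝ²)`. -/
theorem scaling_removes_lower_order_terms (C : ℝ) (hC : 0 < C)
    (h : ∀ f : ℝ × ℝ → ℝ,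
      ContDiff ℝ (⊤ : ℕ∞) f → HasCompactSupport f → tsupport f ⊆ uball →
      (∫ p, |pd1 (pd1 f) p|) ≤
        C * ((⨆ p, |f p|) + (⨆ p, emag (pd1 f p, pd2 f p)) +
          ∫ p, |pd1 (pd1 f) p + pd2 (pd2 f) p|)) :
    ∀ f : ℝ × ℝ → ℝ, ContDiff ℝ (⊤ : ℕ∞) f → HasCompactSupport f →
      (∫ p, |pd1 (pd1 f) p|) ≤ C * ∫ p, |pd1 (pd1 f) p + pd2 (pd2 f) p| := by
  intro f hf hfc
  have hk : (2 : WithTop ℕ∞) ≤ (⊤ : ℕ∞) := WithTop.coe_le_coe.mpr le_top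
  obtain ⟨R, hR, hfR⟩ := hfc.isCompact.isBounded.subset_closedBall_lt 0 0
  obtain ⟨M₁, hM₁⟩ := hf.continuous.bounded_above_of_compact_support hfc
  obtain ⟨M₂, hM₂⟩ := exists_emag_grad_le (hf.of_le (le_trans (by norm_num) hk)) hfc
  refine le_of_forall_nat_sq_mul_le (A := C * M₁) (B := C * (8 * R * M₂)) fun n hn => ?_
  obtain ⟨g, hg, hgc, hgB, hg₀, hg₁, hg₁₁, hgΔ⟩ :=
    exists_rescaled_copies hf hk hfc hR hfR hM₁ hM₂ hn
  have hg := h g hg hgc hgB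
  rw [hg₁₁, hgΔ] at hg
  calc (n : ℝ) ^ 2 * ∫ p, |pd1 (pd1 f) p|
      ≤ C * (M₁ + 8 * R * n * M₂ + n ^ 2 * ∫ p, |pd1 (pd1 f) p + pd2 (pd2 f) p|) := by
        refine hg.trans (mul_le_mul_of_nonneg_left ?_ hC.le)
        exact add_le_add (add_le_add hg₀ hg₁) le_rfl
    _ = _ := by ring
end
end

section
/- Let ϱ be a probability density on ℝ and b a Borel function on ℝ with ∫_ℝ |b(x)|ϱ(x) dx < ∞ such that the equation ϱ'' − (ϱb)' = 0 holds in the sense of distributions (i.e., ∫_ℝ [φ'' + b φ'] ϱ dx = 0 for all φ ∈ C_0^∞(ℝ)). Then ϱ has a locally absolutely continuous version whose derivative equals ϱb almost everywhere; in particular ϱ' ∈ L¹(ℝ) and ϱ ∈ W^{1,1}(ℝ). -/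
/-!
With `F x = ∫₀ˣ ϱ b`, integrating `∫ φ' ϱ b` by parts turns the equation into
`∫ φ'' (ϱ - F) = 0` for all test functions `φ`. Test functions of mean zero are exactly the
derivatives of test functions, so the functional `ψ ↦ ∫ ψ' (ϱ - F)` is a multiple `c ∫ ψ` of the
integral, and then `ϱ - F + c x` is annihilated by all derivatives, hence constant:
`ϱ = F - c x + K` a.e. Since `F` is bounded by `‖ϱ b‖₁` and `ϱ ≥ 0`, the slope vanishes, and
`F + K` is the required version of `ϱ`; it is differentiable with derivative `ϱ b` a.e. by the
Lebesgue differentiation theorem.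
-/

open MeasureTheory Set Filter
open scoped ContDiff

theorem HasCompactSupport.exists_lt_tsupport_subset_Ioo {E : Type*} [Zero E] [TopologicalSpace E]
    {f : ℝ → E} (hf : HasCompactSupport f) (a : ℝ) :
    ∃ R, a < R ∧ tsupport f ⊆ Ioo (-R) R := by
  obtain ⟨R, haR, hR⟩ := hf.isBounded.subset_ball_lt a 0
  exact ⟨R, haR, by simpa [Real.ball_eq_Ioo] using hR⟩

theorem MeasureTheory.LocallyIntegrable.continuous_primitive {h : ℝ → ℝ}
    (hh : LocallyIntegrable h) (a : ℝ) : Continuous fun x ↦ ∫ t in a..x, h t :=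
  intervalIntegral.continuous_primitive
    (fun _ _ ↦ (hh.integrableOn_isCompact isCompact_uIcc).intervalIntegrable) a

theorem exists_contDiff_hasCompactSupport_deriv_eq {ψ : ℝ → ℝ} (hψ : ContDiff ℝ ∞ ψ)
    (hψs : HasCompactSupport ψ) (h0 : ∫ x, ψ x = 0) :
    ∃ Φ : ℝ → ℝ, ContDiff ℝ ∞ Φ ∧ HasCompactSupport Φ ∧ deriv Φ = ψ := by
  obtain ⟨R, -, hR⟩ := hψs.exists_lt_tsupport_subset_Ioo 0
  have hψR : ∀ t ∉ Ioo (-R) R, ψ t = 0 := fun t ht ↦ image_eq_zero_of_notMem_tsupport (ht <| hR ·)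
  have hΦ : ∀ x, HasDerivAt (fun x ↦ ∫ t in (-R)..x, ψ t) (ψ x) x := fun x ↦
    (hψ.continuous.integral_hasStrictDerivAt _ _).hasDerivAt
  have hderiv : deriv (fun x ↦ ∫ t in (-R)..x, ψ t) = ψ := funext fun x ↦ (hΦ x).deriv
  refine ⟨fun x ↦ ∫ t in (-R)..x, ψ t, ?_, ?_, hderiv⟩
  · exact contDiff_infty_iff_deriv.2 ⟨fun x ↦ (hΦ x).differentiableAt, by rwa [hderiv]⟩
  · refine HasCompactSupport.intro (isCompact_Icc (a := -R) (b := R)) fun x hx ↦ ?_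
    rcases not_and_or.1 hx with hx | hx <;> push Not at hx
    · refine intervalIntegral.integral_zero_ae (ae_of_all _ fun t ht ↦ hψR t ?_)
      rw [uIoc_of_ge hx.le] at ht
      exact fun h ↦ h.1.not_ge ht.2
    · rw [intervalIntegral.integral_eq_integral_of_support_subset, h0]
      exact (subset_tsupport ψ).trans (hR.trans fun t ht ↦ ⟨ht.1, ht.2.le.trans hx.le⟩)

theorem integral_deriv_mul_intervalIntegral {h ψ : ℝ → ℝ} (hh : LocallyIntegrable h)
    (hψ : ContDiff ℝ 1 ψ) (hψs : HasCompactSupport ψ) (a : ℝ) :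
    ∫ x, deriv ψ x * ∫ t in a..x, h t = -∫ x, ψ x * h x := by
  obtain ⟨R, haR, hR⟩ := hψs.exists_lt_tsupport_subset_Ioo |a|
  have hRψ : ∀ g : ℝ → ℝ, Function.support (fun x ↦ ψ x * g x) ⊆ Ioc (-R) R :=
    fun g ↦ (Function.support_mul_subset_left ψ g).trans <|
      (subset_tsupport ψ).trans <| hR.trans Ioo_subset_Ioc_self
  have hRψ' : ∀ g : ℝ → ℝ, Function.support (fun x ↦ deriv ψ x * g x) ⊆ Ioc (-R) R :=
    fun g ↦ (Function.support_mul_subset_left _ g).trans <|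
      support_deriv_subset.trans <| hR.trans Ioo_subset_Ioc_self
  have hψR : ψ R = 0 := image_eq_zero_of_notMem_tsupport fun h ↦ (hR h).2.false
  have hψR' : ψ (-R) = 0 := image_eq_zero_of_notMem_tsupport fun h ↦ (hR h).1.false
  have haR' : a ∈ uIcc (-R) R :=
    Icc_subset_uIcc ⟨(abs_lt.1 haR).1.le, (abs_lt.1 haR).2.le⟩
  have hF : AbsolutelyContinuousOnInterval (fun x ↦ ∫ t in a..x, h t) (-R) R :=
    (hh.integrableOn_isCompact isCompact_uIcc).intervalIntegrable
      |>.absolutelyContinuousOnInterval_intervalIntegral haR'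
  have hderivF : ∀ᵐ x, deriv (fun x ↦ ∫ t in a..x, h t) x = h x := by
    filter_upwards [LocallyIntegrable.ae_hasDerivAt_integral hh] with x hx using (hx a).deriv
  calc ∫ x, deriv ψ x * ∫ t in a..x, h t
      = ∫ x in (-R)..R, (∫ t in a..x, h t) * deriv ψ x := by
        rw [← intervalIntegral.integral_eq_integral_of_support_subset (hRψ' _)]
        simp_rw [mul_comm]
    _ = -∫ x in (-R)..R, ψ x * h x := by
        rw [hF.integral_mul_deriv_eq_deriv_mul
          (hψ.contDiffOn.absolutelyContinuousOnInterval), hψR, hψR', mul_zero, mul_zero,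
          sub_zero, zero_sub, neg_inj]
        refine intervalIntegral.integral_congr_ae ?_
        filter_upwards [hderivF] with x hx _ using by rw [hx, mul_comm]
    _ = -∫ x, ψ x * h x := by rw [intervalIntegral.integral_eq_integral_of_support_subset (hRψ _)]

theorem exists_eq_integral_mul_of_integral_eq_zero (L : (ℝ → ℝ) → ℝ)
    (hL : ∀ u w : ℝ → ℝ, ContDiff ℝ ∞ u → HasCompactSupport u → ContDiff ℝ ∞ w →
      HasCompactSupport w → ∀ a : ℝ, L (fun x ↦ u x - a * w x) = L u - a * L w)
    (h0 : ∀ u, ContDiff ℝ ∞ u → HasCompactSupport u → ∫ x, u x = 0 → L u = 0) :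
    ∃ c, ∀ u, ContDiff ℝ ∞ u → HasCompactSupport u → L u = (∫ x, u x) * c := by
  let θ : ContDiffBump (0 : ℝ) := ⟨1, 2, one_pos, one_lt_two⟩
  refine ⟨L (θ.normed volume), fun u hu hus ↦ ?_⟩
  have hθ : ContDiff ℝ ∞ (θ.normed volume) := θ.contDiff_normed
  have hθs : HasCompactSupport (θ.normed volume) := θ.hasCompactSupport_normed
  have hmean : ∫ x, (u x - (∫ x, u x) * θ.normed volume x) = 0 := by
    rw [integral_sub (hu.continuous.integrable_of_hasCompactSupport hus)
      ((hθ.continuous.integrable_of_hasCompactSupport hθs).const_mul _), integral_const_mul,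
      θ.integral_normed, mul_one, sub_self]
  have := h0 _ (hu.sub (contDiff_const.mul hθ)) (hus.sub hθs.mul_left) hmean
  rw [hL u _ hu hus hθ hθs] at this
  linarith

theorem exists_ae_eq_const_of_integral_mul_eq_zero {f : ℝ → ℝ} (hf : LocallyIntegrable f)
    (h : ∀ u, ContDiff ℝ ∞ u → HasCompactSupport u → ∫ x, u x = 0 → ∫ x, u x * f x = 0) :
    ∃ K, ∀ᵐ x, f x = K := by
  have hint : ∀ u : ℝ → ℝ, Continuous u → HasCompactSupport u → Integrable (fun x ↦ u x * f x) :=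
    fun u hu hus ↦ hf.integrable_smul_left_of_hasCompactSupport hu hus
  obtain ⟨K, hK⟩ := exists_eq_integral_mul_of_integral_eq_zero (fun u ↦ ∫ x, u x * f x)
    (fun u w hu hus hw hws a ↦ by
      simp only [sub_mul, mul_assoc]
      rw [integral_sub (hint u hu.continuous hus) ((hint w hw.continuous hws).const_mul a),
        integral_const_mul]) h
  refine ⟨K, ?_⟩
  have := ae_eq_zero_of_integral_contDiff_smul_eq_zero (hf.sub (locallyIntegrable_const K))
    fun u hu hus ↦ ?_
  · filter_upwards [this] with x hx using sub_eq_zero.1 hx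
  simp only [Pi.sub_apply, smul_eq_mul, mul_sub]
  rw [integral_sub (hint u hu.continuous hus)
    ((hu.continuous.integrable_of_hasCompactSupport hus).mul_const K), integral_mul_const,
    hK u hu hus, sub_self]

theorem exists_ae_eq_const_of_integral_deriv_mul_eq_zero {f : ℝ → ℝ} (hf : LocallyIntegrable f)
    (h : ∀ φ, ContDiff ℝ ∞ φ → HasCompactSupport φ → ∫ x, deriv φ x * f x = 0) :
    ∃ K, ∀ᵐ x, f x = K :=
  exists_ae_eq_const_of_integral_mul_eq_zero hf fun u hu hus h0 ↦ by
    obtain ⟨Φ, hΦ, hΦs, rfl⟩ := exists_contDiff_hasCompactSupport_deriv_eq hu hus h0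
    exact h Φ hΦ hΦs

theorem exists_ae_eq_affine_of_integral_deriv_deriv_mul_eq_zero {v : ℝ → ℝ}
    (hv : LocallyIntegrable v)
    (h : ∀ φ, ContDiff ℝ ∞ φ → HasCompactSupport φ → ∫ x, deriv (deriv φ) x * v x = 0) :
    ∃ c K : ℝ, ∀ᵐ x, v x = c * x + K := by
  have hint : ∀ u, ContDiff ℝ ∞ u → HasCompactSupport u → ∀ f : ℝ → ℝ, LocallyIntegrable f →
      Integrable (fun x ↦ deriv u x * f x) := fun u hu hus _ hf ↦
    hf.integrable_smul_left_of_hasCompactSupport (hu.continuous_deriv (by simp)) hus.deriv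
  have hlinear : ∀ u w, ContDiff ℝ ∞ u → HasCompactSupport u → ContDiff ℝ ∞ w →
      HasCompactSupport w → ∀ a : ℝ, ∫ x, deriv (fun x ↦ u x - a * w x) x * v x =
        (∫ x, deriv u x * v x) - a * ∫ x, deriv w x * v x := by
    intro u w hu hus hw hws a
    have hu' := hu.differentiable (by simp)
    have hw' := hw.differentiable (by simp)
    simp only [deriv_fun_sub (hu' _) ((hw' _).const_mul a), deriv_const_mul _ (hw' _), sub_mul,
      mul_assoc]
    rw [integral_sub (hint u hu hus v hv) ((hint w hw hws v hv).const_mul a), integral_const_mul]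
  obtain ⟨c, hc⟩ := exists_eq_integral_mul_of_integral_eq_zero (fun u ↦ ∫ x, deriv u x * v x)
    hlinear fun u hu hus h0 ↦ by
      obtain ⟨Φ, hΦ, hΦs, rfl⟩ := exists_contDiff_hasCompactSupport_deriv_eq hu hus h0
      exact h Φ hΦ hΦs
  have hslope : ∀ u, ContDiff ℝ ∞ u → HasCompactSupport u →
      ∫ x, deriv u x * (x * c) = -(∫ x, u x) * c := fun u hu hus ↦ by
    simpa [integral_mul_const] using
      integral_deriv_mul_intervalIntegral (locallyIntegrable_const c) (hu.of_le (by simp)) hus 0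
  obtain ⟨K, hK⟩ := exists_ae_eq_const_of_integral_deriv_mul_eq_zero (f := fun x ↦ v x + x * c)
    (hv.add (continuous_mul_const c).locallyIntegrable) fun u hu hus ↦ by
      simp_rw [mul_add]
      rw [integral_add (hint u hu hus v hv)
        (hint u hu hus _ (continuous_mul_const c).locallyIntegrable), hc u hu hus,
        hslope u hu hus]
      ring
  exact ⟨-c, K, by filter_upwards [hK] with x hx; linarith⟩

theorem eq_zero_of_ae_le_mul {c C : ℝ} (h : ∀ᵐ x : ℝ, C ≤ c * x) : c = 0 := by
  by_contra hc
  have hpos : 0 < volume {x : ℝ | c * x < C} :=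
    (isOpen_lt (continuous_const_mul c) continuous_const).measure_pos volume
      ⟨(C - 1) / c, by simp [mul_div_cancel₀ _ hc]⟩
  exact hpos.ne' (by simpa [ae_iff] using h)

theorem integral_deriv_deriv_mul_sub_intervalIntegral {ϱ b φ : ℝ → ℝ} (hϱ : LocallyIntegrable ϱ)
    (hϱb : LocallyIntegrable (fun x ↦ ϱ x * b x)) (hφ : ContDiff ℝ ∞ φ)
    (hφs : HasCompactSupport φ) :
    ∫ x, deriv (deriv φ) x * (ϱ x - ∫ t in (0 : ℝ)..x, ϱ t * b t) =
      ∫ x, (deriv (deriv φ) x + b x * deriv φ x) * ϱ x := by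
  have hφ' : ContDiff ℝ ∞ (deriv φ) := (contDiff_infty_iff_deriv.1 hφ).2
  have hφ'' : Continuous (deriv (deriv φ)) := hφ'.continuous_deriv (by simp)
  have i1 : Integrable (fun x ↦ deriv (deriv φ) x * ϱ x) :=
    hϱ.integrable_smul_left_of_hasCompactSupport hφ'' hφs.deriv.deriv
  have i2 : Integrable (fun x ↦ deriv (deriv φ) x * ∫ t in (0 : ℝ)..x, ϱ t * b t) :=
    (hϱb.continuous_primitive 0).locallyIntegrable.integrable_smul_left_of_hasCompactSupport
      hφ'' hφs.deriv.deriv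
  have i3 : Integrable (fun x ↦ deriv φ x * (ϱ x * b x)) :=
    hϱb.integrable_smul_left_of_hasCompactSupport hφ'.continuous hφs.deriv
  simp_rw [mul_sub, add_mul]
  rw [integral_sub i1 i2, integral_deriv_mul_intervalIntegral hϱb (hφ'.of_le (by simp)) hφs.deriv,
    sub_neg_eq_add, ← integral_add i1 i3]
  congr 1 with x
  ring

theorem integral_mul_eq_neg_integral_mul_deriv_of_ae_eq {g h φ : ℝ → ℝ}
    (hh : LocallyIntegrable h) {a K : ℝ} (hg : ∀ᵐ x, (∫ t in a..x, h t) + K = g x)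
    (hφ : ContDiff ℝ 1 φ) (hφs : HasCompactSupport φ) :
    ∫ x, h x * φ x = -∫ x, g x * deriv φ x := by
  have hφ' : Integrable (deriv φ) :=
    (hφ.continuous_deriv le_rfl).integrable_of_hasCompactSupport hφs.deriv
  have hmean : ∫ x, deriv φ x = 0 := integral_eq_zero_of_hasDerivAt_of_integrable
    (fun x ↦ (hφ.differentiable one_ne_zero x).hasDerivAt) hφ'
    (hφ.continuous.integrable_of_hasCompactSupport hφs)
  have hφ'F : Integrable (fun x ↦ deriv φ x * ∫ t in a..x, h t) :=
    (hh.continuous_primitive a).locallyIntegrable.integrable_smul_left_of_hasCompactSupport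
      (hφ.continuous_deriv le_rfl) hφs.deriv
  calc ∫ x, h x * φ x = -∫ x, deriv φ x * ((∫ t in a..x, h t) + K) := by
        simp_rw [mul_add]
        rw [integral_add hφ'F (hφ'.mul_const K), integral_mul_const, hmean, zero_mul, add_zero,
          integral_deriv_mul_intervalIntegral hh hφ hφs, neg_neg]
        congr 1 with x
        exact mul_comm _ _
    _ = -∫ x, g x * deriv φ x := by
        rw [integral_congr_ae (hg.mono fun x hx ↦ by rw [hx, mul_comm])]

theorem one_dimensional_FPK_regularity_general (ϱ b : ℝ → ℝ)
    (hϱ0 : ∀ x, 0 ≤ ϱ x) (hϱ1 : ∫ x, ϱ x = 1)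
    (hbm : Measurable b)
    (hbϱ : Integrable (fun x => |b x| * ϱ x))
    (heq : ∀ φ : ℝ → ℝ, ContDiff ℝ (⊤ : ℕ∞) φ → HasCompactSupport φ →
      ∫ x, (deriv (deriv φ) x + b x * deriv φ x) * ϱ x = 0) :
    ∃ g : ℝ → ℝ,
      (∀ᵐ x : ℝ, g x = ϱ x) ∧
      (∀ x y : ℝ, g y - g x = ∫ t in x..y, ϱ t * b t) ∧
      (∀ᵐ x : ℝ, HasDerivAt g (ϱ x * b x) x) ∧
      Integrable ϱ ∧ Integrable (fun x => ϱ x * b x) ∧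
      (∀ φ : ℝ → ℝ, ContDiff ℝ (⊤ : ℕ∞) φ → HasCompactSupport φ →
        ∫ x, (ϱ x * b x) * φ x = - ∫ x, ϱ x * deriv φ x) := by
  have hϱi : Integrable ϱ := .of_integral_ne_zero (by rw [hϱ1]; exact one_ne_zero)
  have hh : Integrable (fun x ↦ ϱ x * b x) :=
    hbϱ.mono' (hϱi.aestronglyMeasurable.mul hbm.aestronglyMeasurable) <| ae_of_all _ fun x ↦ by
      rw [norm_mul, Real.norm_of_nonneg (hϱ0 x), Real.norm_eq_abs, mul_comm]
  set F := fun x ↦ ∫ t in (0 : ℝ)..x, ϱ t * b t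
  have hFc : Continuous F := hh.locallyIntegrable.continuous_primitive 0
  obtain ⟨c, K, hcK⟩ := exists_ae_eq_affine_of_integral_deriv_deriv_mul_eq_zero
    (v := fun x ↦ ϱ x - F x) (hϱi.locallyIntegrable.sub hFc.locallyIntegrable)
    fun φ hφ hφs ↦ (integral_deriv_deriv_mul_sub_intervalIntegral hϱi.locallyIntegrable
      hh.locallyIntegrable hφ hφs).trans (heq φ hφ hφs)
  have hFle : ∀ x, F x ≤ ∫ t, ‖ϱ t * b t‖ := fun x ↦ (Real.le_norm_self _).trans <|
    intervalIntegral.norm_integral_le_integral_norm_uIoc.trans <|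
      setIntegral_le_integral hh.norm (ae_of_all _ fun _ ↦ norm_nonneg _)
  obtain rfl : c = 0 := eq_zero_of_ae_le_mul (C := -(∫ t, ‖ϱ t * b t‖) - K) <| by
    filter_upwards [hcK] with x hx
    linarith [hFle x, hϱ0 x]
  have hg : ∀ᵐ x, F x + K = ϱ x := by
    filter_upwards [hcK] with x hx
    linarith
  refine ⟨fun x ↦ F x + K, hg, fun x y ↦ ?_, ?_, hϱi, hh, fun φ hφ hφs ↦ ?_⟩
  · rw [add_sub_add_right_eq_sub]
    exact intervalIntegral.integral_interval_sub_left hh.intervalIntegrable hh.intervalIntegrable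
  · filter_upwards [LocallyIntegrable.ae_hasDerivAt_integral hh.locallyIntegrable] with x hx
    exact (hx 0).add_const K
  · exact integral_mul_eq_neg_integral_mul_deriv_of_ae_eq hh.locallyIntegrable hg
      (hφ.of_le (by simp)) hφs

/-- If `ϱ` is a probability density on `ℝ` and `b` is Borel with `∫ |b| ϱ dx < ∞` such that
`ϱ'' − (ϱ b)' = 0` in the sense of distributions, then `ϱ` has a locally absolutely
continuous version (given by an indefinite integral of `ϱ b`) whose derivative is `ϱ b`
almost everywhere; in particular `ϱ' = ϱ b ∈ L¹(ℝ)` (as a weak derivative) and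
`ϱ ∈ W^{1,1}(ℝ)`. -/
theorem one_dimensional_FPK_regularity (ϱ b : ℝ → ℝ)
    (hϱm : Measurable ϱ) (hϱ0 : ∀ x, 0 ≤ ϱ x) (hϱ1 : ∫ x, ϱ x = 1)
    (hbm : Measurable b)
    (hbϱ : Integrable (fun x => |b x| * ϱ x))
    (heq : ∀ φ : ℝ → ℝ, ContDiff ℝ (⊤ : ℕ∞) φ → HasCompactSupport φ →
      ∫ x, (deriv (deriv φ) x + b x * deriv φ x) * ϱ x = 0) :
    ∃ g : ℝ → ℝ,
      (∀ᵐ x : ℝ, g x = ϱ x) ∧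
      (∀ x y : ℝ, g y - g x = ∫ t in x..y, ϱ t * b t) ∧
      (∀ᵐ x : ℝ, HasDerivAt g (ϱ x * b x) x) ∧
      Integrable ϱ ∧ Integrable (fun x => ϱ x * b x) ∧
      (∀ φ : ℝ → ℝ, ContDiff ℝ (⊤ : ℕ∞) φ → HasCompactSupport φ →
        ∫ x, (ϱ x * b x) * φ x = - ∫ x, ϱ x * deriv φ x) :=
  one_dimensional_FPK_regularity_general ϱ b hϱ0 hϱ1 hbm hbϱ heq
end

section
/- Let f(x,y) = V(r), r = √(x²+y²), be a radial function on the unit disc in ℝ², where V ∈ C²((0,1)), f is integrable on the disc, V'(r) is integrable near zero on the real line (i.e., ∫_0^{1/2} |V'(r)| dr < ∞), and Δf = V''(r) + r^{-1}V'(r) is integrable with respect to Lebesgue measure near the origin in the plane. Then V''(r) is integrable near the origin in the plane (i.e., ∫_0^{1/2} |V''(r)| r dr < ∞), and consequently all second order partial derivatives of f are integrable near the origin, so f belongs to the second Sobolev class W^{1,2} in a neighborhood of the origin. -/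
open MeasureTheory Real

noncomputable section

/-- The open Euclidean disc of radius `R` centered at the origin in `ℝ²`. -/
def disc (R : ℝ) : Set (ℝ × ℝ) := {p : ℝ × ℝ | p.1 ^ 2 + p.2 ^ 2 < R ^ 2}

/-!
In polar coordinates `dx dy = r dr dθ`, so a radial function `F(|x|)` is integrable on the disc
of radius `R` iff `r F(r)` is integrable on `(0, R)`. Integrability of `Δf` is therefore that of
`r V'' + V'`, and as `V'` is integrable on the line, `r V''` is integrable, i.e. `V''(|x|)` is
integrable on the disc. Away from the origin
`∂_v ∂_w f = V'' ⟪x,v⟫⟪x,w⟫/r² + (V'/r) (⟪v,w⟫ - ⟪x,v⟫⟪x,w⟫/r²)`,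
which is bounded by `(|V''| + 2 |V'|/r) |v| |w|`, and `|V'|/r` is integrable on the disc because
`|V'|` is integrable on the line; likewise `|∂_v f| ≤ |V'| |v|`.
-/

open Set Topology
open scoped RealInnerProductSpace

section Radial

variable {E : Type*} [NormedAddCommGroup E] [InnerProductSpace ℝ E] {x : E}

theorem hasFDerivAt_norm_of_ne_zero (hx : x ≠ 0) :
    HasFDerivAt (‖·‖) (‖x‖⁻¹ • innerSL ℝ x) x := by
  have h := (hasStrictFDerivAt_norm_sq x).hasFDerivAt.sqrt (by positivity)
  simp only [Real.sqrt_sq (norm_nonneg _)] at h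
  convert h using 1
  ext v
  simp only [smul_apply, coe_innerSL_apply, smul_eq_mul, one_div, mul_inv_rev, nsmul_eq_mul,
    Nat.cast_ofNat]
  field_simp

variable {V : ℝ → ℝ}

theorem fderiv_comp_norm_apply (hV : DifferentiableAt ℝ V ‖x‖) (hx : x ≠ 0) (v : E) :
    fderiv ℝ (fun y => V ‖y‖) x v = deriv V ‖x‖ / ‖x‖ * ⟪x, v⟫ := by
  have h : HasFDerivAt (fun y => V ‖y‖) _ x :=
    hV.hasDerivAt.comp_hasFDerivAt x (hasFDerivAt_norm_of_ne_zero hx)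
  rw [h.fderiv]
  simp only [smul_apply, coe_innerSL_apply, smul_eq_mul]
  ring

theorem fderiv_fderiv_comp_norm_apply {s : Set ℝ} (hV : ContDiffOn ℝ 2 V s) (hs : IsOpen s)
    (hxs : ‖x‖ ∈ s) (hx : x ≠ 0) (v w : E) :
    fderiv ℝ (fun y => fderiv ℝ (fun z => V ‖z‖) y v) x w =
      deriv (deriv V) ‖x‖ * (⟪x, v⟫ * ⟪x, w⟫ / ‖x‖ ^ 2) +
        deriv V ‖x‖ / ‖x‖ * (⟪v, w⟫ - ⟪x, v⟫ * ⟪x, w⟫ / ‖x‖ ^ 2) := by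
  have hnear : (fun y => fderiv ℝ (fun z => V ‖z‖) y v) =ᶠ[𝓝 x]
      fun y => deriv V ‖y‖ / ‖y‖ * ⟪v, y⟫ := by
    filter_upwards [continuous_norm.continuousAt.preimage_mem_nhds (hs.mem_nhds hxs),
      eventually_ne_nhds hx] with y hys hy0
    have hVy := (hV.contDiffAt (hs.mem_nhds hys)).differentiableAt (by simp)
    rw [fderiv_comp_norm_apply hVy hy0, real_inner_comm]
  have hr : 0 < ‖x‖ := norm_pos_iff.2 hx
  have hV' : ContDiffOn ℝ 1 (deriv V) s := hV.deriv_of_isOpen hs (by norm_num)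
  have hV'' : HasDerivAt (deriv V) (deriv (deriv V) ‖x‖) ‖x‖ :=
    ((hV'.contDiffAt (hs.mem_nhds hxs)).differentiableAt (by simp)).hasDerivAt
  have hW : HasDerivAt (fun t => deriv V t / t)
      ((deriv (deriv V) ‖x‖ * ‖x‖ - deriv V ‖x‖ * 1) / ‖x‖ ^ 2) ‖x‖ :=
    hV''.div (hasDerivAt_id _) hr.ne'
  have hH : HasFDerivAt (fun y => deriv V ‖y‖ / ‖y‖ * ⟪v, y⟫) _ x :=
    (hW.comp_hasFDerivAt x (hasFDerivAt_norm_of_ne_zero hx)).mul (innerSL ℝ v).hasFDerivAt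
  rw [hnear.fderiv_eq, hH.fderiv]
  simp only [Function.comp_apply, mul_one, add_apply, smul_apply, coe_innerSL_apply,
    smul_eq_mul]
  rw [real_inner_comm v x]
  field_simp
  ring

theorem abs_fderiv_comp_norm_apply_le (hV : DifferentiableAt ℝ V ‖x‖) (hx : x ≠ 0) (v : E) :
    |fderiv ℝ (fun y => V ‖y‖) x v| ≤ |deriv V ‖x‖| * ‖v‖ := by
  have hr : 0 < ‖x‖ := norm_pos_iff.2 hx
  rw [fderiv_comp_norm_apply hV hx, abs_mul, abs_div, abs_of_pos hr]
  calc |deriv V ‖x‖| / ‖x‖ * |⟪x, v⟫| ≤ |deriv V ‖x‖| / ‖x‖ * (‖x‖ * ‖v‖) := by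
        gcongr; exact abs_real_inner_le_norm x v
    _ = |deriv V ‖x‖| * ‖v‖ := by field_simp

theorem abs_fderiv_fderiv_comp_norm_apply_le {s : Set ℝ} (hV : ContDiffOn ℝ 2 V s)
    (hs : IsOpen s) (hxs : ‖x‖ ∈ s) (hx : x ≠ 0) (v w : E) :
    |fderiv ℝ (fun y => fderiv ℝ (fun z => V ‖z‖) y v) x w| ≤
      (|deriv (deriv V) ‖x‖| + 2 * (|deriv V ‖x‖| / ‖x‖)) * (‖v‖ * ‖w‖) := by
  have hr : 0 < ‖x‖ := norm_pos_iff.2 hx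
  have hvw : |⟪v, w⟫| ≤ ‖v‖ * ‖w‖ := abs_real_inner_le_norm v w
  have hxvw : |⟪x, v⟫ * ⟪x, w⟫ / ‖x‖ ^ 2| ≤ ‖v‖ * ‖w‖ := by
    rw [abs_div, abs_mul, abs_of_pos (by positivity : 0 < ‖x‖ ^ 2), div_le_iff₀ (by positivity)]
    calc |⟪x, v⟫| * |⟪x, w⟫| ≤ (‖x‖ * ‖v‖) * (‖x‖ * ‖w‖) := by
          gcongr <;> exact abs_real_inner_le_norm _ _
      _ = ‖v‖ * ‖w‖ * ‖x‖ ^ 2 := by ring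
  rw [fderiv_fderiv_comp_norm_apply hV hs hxs hx]
  set a := ⟪x, v⟫ * ⟪x, w⟫ / ‖x‖ ^ 2
  have hB : |deriv V ‖x‖ / ‖x‖| = |deriv V ‖x‖| / ‖x‖ := by rw [abs_div, abs_of_pos hr]
  calc _ ≤ |deriv (deriv V) ‖x‖ * a| + |deriv V ‖x‖ / ‖x‖ * (⟪v, w⟫ - a)| := abs_add_le _ _
    _ ≤ |deriv (deriv V) ‖x‖| * (‖v‖ * ‖w‖) +
        |deriv V ‖x‖| / ‖x‖ * (‖v‖ * ‖w‖ + ‖v‖ * ‖w‖) := by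
        rw [abs_mul, abs_mul, hB]
        gcongr
        exact (abs_sub _ _).trans (add_le_add hvw hxvw)
    _ = _ := by ring

end Radial

theorem fderiv_fderiv_comp_continuousLinearEquiv_apply {𝕜 E F G : Type*}
    [NontriviallyNormedField 𝕜] [NormedAddCommGroup E] [NormedSpace 𝕜 E]
    [NormedAddCommGroup F] [NormedSpace 𝕜 F] [NormedAddCommGroup G] [NormedSpace 𝕜 G]
    (L : E ≃L[𝕜] F) (g : F → G) (x v w : E) :
    fderiv 𝕜 (fun y => fderiv 𝕜 (g ∘ L) y v) x w =
      fderiv 𝕜 (fun z => fderiv 𝕜 g z (L v)) (L x) (L w) := by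
  have h : (fun y => fderiv 𝕜 (g ∘ L) y v) = (fun z => fderiv 𝕜 g z (L v)) ∘ L := by
    funext y
    rw [L.comp_right_fderiv]
    rfl
  rw [h, L.comp_right_fderiv]
  rfl

-- `ℝ × ℝ` carries the sup norm; its Euclidean norm is the one of `ℂ`.
theorem emag_eq_norm (p : ℝ × ℝ) : emag p = ‖Complex.equivRealProdCLM.symm p‖ := by
  simp [emag, Complex.norm_def, Complex.normSq_apply, sq]

theorem comp_emag_eq_comp_norm (V : ℝ → ℝ) :
    (fun p => V (emag p)) = (fun c : ℂ => V ‖c‖) ∘ Complex.equivRealProdCLM.symm := by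
  funext p
  rw [Function.comp_apply, emag_eq_norm]

theorem emag_pos_iff {p : ℝ × ℝ} : 0 < emag p ↔ p ≠ 0 := by
  rw [emag_eq_norm, norm_pos_iff, ne_eq, ne_eq, ContinuousLinearEquiv.map_eq_zero_iff]

theorem disc_eq_preimage_ball {R : ℝ} (hR : 0 ≤ R) :
    disc R = Complex.equivRealProdCLM.symm ⁻¹' Metric.ball 0 R := by
  ext p
  rw [mem_preimage, mem_ball_zero_iff, ← emag_eq_norm, emag, Real.sqrt_lt (by positivity) hR]
  rfl

theorem disc_subset_disc {R S : ℝ} (hR : 0 ≤ R) (hRS : R ≤ S) : disc R ⊆ disc S := by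
  rw [disc_eq_preimage_ball hR, disc_eq_preimage_ball (hR.trans hRS)]
  exact preimage_mono (Metric.ball_subset_ball hRS)

theorem measurableSet_disc (R : ℝ) : MeasurableSet (disc R) :=
  measurableSet_lt (by fun_prop) measurable_const

theorem ae_restrict_disc_emag_mem_Ioo {R : ℝ} (hR : 0 ≤ R) :
    ∀ᵐ p ∂volume.restrict (disc R), emag p ∈ Ioo 0 R := by
  have h0 : ∀ᵐ p : ℝ × ℝ, p ≠ 0 := compl_mem_ae_iff.2 (measure_singleton 0)
  filter_upwards [ae_restrict_of_ae h0, ae_restrict_mem (measurableSet_disc R)] with p hp hpR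
  rw [disc_eq_preimage_ball hR, mem_preimage, mem_ball_zero_iff, ← emag_eq_norm] at hpR
  exact ⟨emag_pos_iff.2 hp, hpR⟩

theorem integrableOn_disc_comp_emag_iff {E : Type*} [NormedAddCommGroup E] [NormedSpace ℝ E]
    {F : ℝ → E} {R : ℝ} (hR : 0 ≤ R) :
    IntegrableOn (fun p => F (emag p)) (disc R) ↔ IntegrableOn (fun r => r • F r) (Ioo 0 R) := by
  have h := integrableOn_fun_norm_addHaar (volume : Measure ℂ) (f := F) (r := R)
  norm_num [Complex.finrank_real_complex] at h
  have hL := Complex.volume_preserving_equiv_real_prod.symm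
  rw [← h, disc_eq_preimage_ball hR,
    ← hL.integrableOn_comp_preimage (MeasurableEquiv.measurableEmbedding _)]
  simp only [Function.comp_def, emag_eq_norm]
  rfl

section RadialProfile

variable {V : ℝ → ℝ} {R : ℝ}

theorem abs_fderiv_comp_emag_apply_le {p : ℝ × ℝ} (hV : DifferentiableAt ℝ V (emag p))
    (hp : p ≠ 0) (v : ℝ × ℝ) :
    |fderiv ℝ (fun z => V (emag z)) p v| ≤ |deriv V (emag p)| * emag v := by
  rw [comp_emag_eq_comp_norm, ContinuousLinearEquiv.comp_right_fderiv]
  simp only [emag_eq_norm] at hV ⊢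
  exact abs_fderiv_comp_norm_apply_le hV (by simpa using hp) _

theorem abs_fderiv_fderiv_comp_emag_apply_le {s : Set ℝ} (hV : ContDiffOn ℝ 2 V s)
    (hs : IsOpen s) {p : ℝ × ℝ} (hps : emag p ∈ s) (hp : p ≠ 0) (v w : ℝ × ℝ) :
    |fderiv ℝ (fun q => fderiv ℝ (fun z => V (emag z)) q v) p w| ≤
      (|deriv (deriv V) (emag p)| + 2 * (|deriv V (emag p)| / emag p)) * (emag v * emag w) := by
  rw [comp_emag_eq_comp_norm, fderiv_fderiv_comp_continuousLinearEquiv_apply]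
  simp only [emag_eq_norm] at hps ⊢
  exact abs_fderiv_fderiv_comp_norm_apply_le hV hs hps (by simpa using hp) _ _

theorem integrableOn_deriv_deriv_mul_self_of_laplacian (hR : 0 ≤ R)
    (hV' : IntegrableOn (deriv V) (Ioo 0 R))
    (hΔ : IntegrableOn (fun p => deriv (deriv V) (emag p) + (emag p)⁻¹ * deriv V (emag p))
      (disc R)) :
    IntegrableOn (fun r => deriv (deriv V) r * r) (Ioo 0 R) := by
  have hΔr := (integrableOn_disc_comp_emag_iff
    (F := fun r => deriv (deriv V) r + r⁻¹ * deriv V r) hR).1 hΔ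
  refine (hΔr.sub hV').congr_fun (fun r hr => ?_) measurableSet_Ioo
  have hr0 : r ≠ 0 := hr.1.ne'
  simp only [Pi.sub_apply, smul_eq_mul]
  field_simp
  ring

theorem integrableOn_disc_fderiv_comp_emag (hR : 0 ≤ R) (hV : DifferentiableOn ℝ V (Ioo 0 R))
    (hV' : IntegrableOn (deriv V) (Ioo 0 R)) (v : ℝ × ℝ) :
    IntegrableOn (fun p => fderiv ℝ (fun z => V (emag z)) p v) (disc R) := by
  have hbound : IntegrableOn (fun p => |deriv V (emag p)|) (disc R) := by
    refine (integrableOn_disc_comp_emag_iff (F := fun r => |deriv V r|) hR).2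
      (hV'.abs.bdd_mul (c := R) measurable_id.aestronglyMeasurable ?_)
    filter_upwards [ae_restrict_mem measurableSet_Ioo] with r hr
    rw [Real.norm_eq_abs, abs_of_pos hr.1]
    exact hr.2.le
  refine (hbound.mul_const (emag v)).mono'
    (measurable_fderiv_apply_const ℝ _ v).aestronglyMeasurable ?_
  filter_upwards [ae_restrict_disc_emag_mem_Ioo hR] with p hp
  exact abs_fderiv_comp_emag_apply_le (hV.differentiableAt (isOpen_Ioo.mem_nhds hp))
    (emag_pos_iff.1 hp.1) v

theorem integrableOn_disc_fderiv_fderiv_comp_emag (hR : 0 ≤ R)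
    (hV : ContDiffOn ℝ 2 V (Ioo 0 R))
    (hV'' : IntegrableOn (fun r => deriv (deriv V) r * r) (Ioo 0 R))
    (hV' : IntegrableOn (deriv V) (Ioo 0 R)) (v w : ℝ × ℝ) :
    IntegrableOn (fun p => fderiv ℝ (fun q => fderiv ℝ (fun z => V (emag z)) q v) p w)
      (disc R) := by
  have hbound : IntegrableOn
      (fun p => |deriv (deriv V) (emag p)| + 2 * (|deriv V (emag p)| / emag p)) (disc R) := by
    refine (integrableOn_disc_comp_emag_iff
      (F := fun r => |deriv (deriv V) r| + 2 * (|deriv V r| / r)) hR).2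
      (IntegrableOn.congr_fun (hV''.abs.add (hV'.abs.const_mul 2)) (fun r hr => ?_)
        measurableSet_Ioo)
    have hr0 : r ≠ 0 := hr.1.ne'
    simp only [Pi.add_apply, smul_eq_mul, abs_mul, abs_of_pos hr.1]
    field_simp
  refine (hbound.mul_const (emag v * emag w)).mono'
    (measurable_fderiv_apply_const ℝ _ w).aestronglyMeasurable ?_
  filter_upwards [ae_restrict_disc_emag_mem_Ioo hR] with p hp
  exact abs_fderiv_fderiv_comp_emag_apply_le hV isOpen_Ioo hp (emag_pos_iff.1 hp.1) v w

end RadialProfile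

/-- Let `f(x,y) = V(r)`, `r = √(x²+y²)`, be a radial function on the unit disc with
`V ∈ C²((0,1))`, `f` integrable on the disc, `V'` integrable near zero on the line, and
`Δf = V'' + r⁻¹ V'` integrable near the origin in the plane. Then `V''` is integrable near
the origin in the plane (`∫₀^{1/2} |V''(r)| r dr < ∞`); consequently all second order
partial derivatives of `f` are integrable near the origin, and `f`, together with its first
and second order partial derivatives, is integrable near the origin (i.e. `f` belongs to the
class `W^{1,2}` there). -/
theorem radial_function_integrable_laplacian_gives_W12 (V : ℝ → ℝ)
    (hV : ContDiffOn ℝ 2 V (Set.Ioo 0 1))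
    (hf_int : IntegrableOn (fun p : ℝ × ℝ => V (emag p)) (disc 1))
    (hV'_int : IntegrableOn (deriv V) (Set.Ioo 0 (1 / 2)))
    (hΔf_int : IntegrableOn
      (fun p : ℝ × ℝ => deriv (deriv V) (emag p) + (emag p)⁻¹ * deriv V (emag p))
      (disc (1 / 2))) :
    IntegrableOn (fun r : ℝ => deriv (deriv V) r * r) (Set.Ioo 0 (1 / 2)) ∧
    IntegrableOn (fun p : ℝ × ℝ => deriv (deriv V) (emag p)) (disc (1 / 2)) ∧
    (∀ v w : ℝ × ℝ, IntegrableOn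
      (fun p : ℝ × ℝ => fderiv ℝ (fun q : ℝ × ℝ => fderiv ℝ (fun z : ℝ × ℝ => V (emag z)) q v) p w)
      (disc (1 / 2))) ∧
    (∀ v : ℝ × ℝ, IntegrableOn
      (fun p : ℝ × ℝ => fderiv ℝ (fun z : ℝ × ℝ => V (emag z)) p v) (disc (1 / 2))) ∧
    IntegrableOn (fun p : ℝ × ℝ => V (emag p)) (disc (1 / 2)) := by
  have hR : (0 : ℝ) ≤ 1 / 2 := by norm_num
  have hV_half : ContDiffOn ℝ 2 V (Ioo 0 (1 / 2)) := hV.mono (Ioo_subset_Ioo_right (by norm_num))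
  have hV''_int := integrableOn_deriv_deriv_mul_self_of_laplacian hR hV'_int hΔf_int
  refine ⟨hV''_int, ?_, integrableOn_disc_fderiv_fderiv_comp_emag hR hV_half hV''_int hV'_int,
    integrableOn_disc_fderiv_comp_emag hR (hV_half.differentiableOn (by norm_num)) hV'_int,
    hf_int.mono_set (disc_subset_disc hR (by norm_num))⟩
  exact (integrableOn_disc_comp_emag_iff (F := deriv (deriv V)) hR).2
    (by simpa only [smul_eq_mul, mul_comm] using hV''_int)
end
end
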